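/- arXiv:2305.12309 — 2 statements merged into one kernel-verified Lean document; each statement's English description precedes it below -/
import Mathlib

section
/- (Proposition 1, necessity) Under uniform pricing with zero price bids, assume each F_i is strictly increasing on [0, X̄_i] and ∑ᵢ yᵢ*(p̄) > D, and fix any allocation rule q ↦ x(q) satisfying 0 ≤ x_i(q) ≤ q_i and ∑_i x_i(q) = D whenever ∑_i q_i > D. Then every pure Nash equilibrium q* satisfies ∑ᵢ qᵢ* = D, and consequently the clearing price at every pure Nash equilibrium equals the price cap p̄. -/
/-!
If total bids fall short of demand, the price is `p̄`, and some supplier bids below its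
newsvendor quantity `yᵢ*(p̄)`; raising its bid by a small `ε` keeps the price at `p̄` and
gains at least `ε·(p̄ − λ·Fᵢ(qᵢ + ε)) > 0`, since `λ·Fᵢ < p̄` below `yᵢ*(p̄)`. If total bids exceed demand, the price is `0`,
so each supplier earns minus its expected shortfall penalty, while bidding `0` earns `0`; hence
every allocated quantity has zero expected shortfall, impossible for the supplier with positive
allocation because `Fⱼ` is strictly increasing from `Fⱼ(0) = 0`.
-/

open MeasureTheory Set

/-- The cumulative distribution function `F(t) = P(X ≤ t)` of a random variable `X`. -/
noncomputable def cdfOf {Ω : Type*} [MeasurableSpace Ω] (μ : Measure Ω) (X : Ω → ℝ) (t : ℝ) : ℝ :=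
  (μ {ω | X ω ≤ t}).toReal

/-- The generalized inverse `F⁻¹(u) = inf {t ≥ 0 : F(t) ≥ u}`. -/
noncomputable def geninv (F : ℝ → ℝ) (u : ℝ) : ℝ :=
  sInf {t : ℝ | 0 ≤ t ∧ u ≤ F t}

/-- The optimal commitment function `y*(π) = F⁻¹(min(π/λ, 1))`. -/
noncomputable def ystar (F : ℝ → ℝ) (lam : ℝ) (pr : ℝ) : ℝ :=
  geninv F (min (pr / lam) 1)

/-- The expected profit `R(x; π) = x·π − λ·E[(x − X)⁺]` of a supplier paid day-ahead
price `π` for committed quantity `x`, with real-time penalty price `λ`. -/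
noncomputable def profit {Ω : Type*} [MeasurableSpace Ω] (μ : Measure Ω) (X : Ω → ℝ)
    (lam : ℝ) (pr : ℝ) (x : ℝ) : ℝ :=
  x * pr - lam * ∫ ω, max (x - X ω) 0 ∂μ

/-- Payoff of supplier `i` in the uniform-pricing game with zero price bids: if the total
bid quantity does not exceed demand the price is `p̄` and `i` is committed to its bid
`q i`; otherwise the price is `0` and the commitments come from the allocation rule. -/
noncomputable def upPayoff {Ω : Type*} [MeasurableSpace Ω] (μ : Measure Ω) {I : ℕ}
    (X : Fin I → Ω → ℝ) (lam pbar D : ℝ) (alloc : (Fin I → ℝ) → Fin I → ℝ)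
    (i : Fin I) (q : Fin I → ℝ) : ℝ :=
  if (∑ k, q k) ≤ D then profit μ (X i) lam pbar (q i)
  else profit μ (X i) lam 0 (alloc q i)

section Shortfall

variable {Ω : Type*} [MeasurableSpace Ω] {μ : Measure Ω} {X : Ω → ℝ}

lemma integrable_posPart_sub [IsFiniteMeasure μ] (hX : Measurable X) (hXnn : ∀ ω, 0 ≤ X ω)
    (x : ℝ) : Integrable (fun ω => max (x - X ω) 0) μ := by
  refine (integrable_const |x|).mono'
    ((measurable_const.sub hX).max measurable_const).aestronglyMeasurable
    (Filter.Eventually.of_forall fun ω => ?_)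
  rw [Real.norm_of_nonneg (le_max_right _ _)]
  exact max_le (by linarith [le_abs_self x, hXnn ω]) (abs_nonneg x)

lemma profit_zero (hXnn : ∀ ω, 0 ≤ X ω) (lam pr : ℝ) : profit μ X lam pr 0 = 0 := by
  have hshort : (fun ω => max (0 - X ω) 0) = fun _ => (0 : ℝ) :=
    funext fun ω => max_eq_right (by linarith [hXnn ω])
  rw [profit, hshort, integral_zero]
  ring

lemma integral_posPart_sub_pos [IsFiniteMeasure μ] (hX : Measurable X)
    (hXnn : ∀ ω, 0 ≤ X ω) {c x : ℝ} (hcx : c < x) (hFc : 0 < cdfOf μ X c) :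
    0 < ∫ ω, max (x - X ω) 0 ∂μ := by
  have hA : MeasurableSet {ω | X ω ≤ c} := hX measurableSet_Iic
  have hint := integrable_posPart_sub (μ := μ) hX hXnn x
  calc 0 < (x - c) * μ.real {ω | X ω ≤ c} := mul_pos (by linarith) hFc
    _ ≤ ∫ ω in {ω | X ω ≤ c}, max (x - X ω) 0 ∂μ :=
      setIntegral_ge_of_const_le_real hA (measure_ne_top μ _)
        (fun ω (hω : X ω ≤ c) => (by linarith : x - c ≤ x - X ω).trans (le_max_left _ _))
        hint.integrableOn
    _ ≤ ∫ ω, max (x - X ω) 0 ∂μ :=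
      setIntegral_le_integral hint (Filter.Eventually.of_forall fun ω => le_max_right _ _)

lemma integral_posPart_sub_pos_of_strictMonoOn [IsFiniteMeasure μ] (hX : Measurable X)
    (hXnn : ∀ ω, 0 ≤ X ω) {Xbar : ℝ} (hXbar : 0 < Xbar) (hF0 : cdfOf μ X 0 = 0)
    (hFstrict : StrictMonoOn (cdfOf μ X) (Icc 0 Xbar)) {x : ℝ} (hx : 0 < x) :
    0 < ∫ ω, max (x - X ω) 0 ∂μ := by
  have hc : 0 < min (x / 2) Xbar := lt_min (by linarith) hXbar
  have hFc : cdfOf μ X 0 < cdfOf μ X (min (x / 2) Xbar) :=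
    hFstrict ⟨le_rfl, hXbar.le⟩ ⟨hc.le, min_le_right _ _⟩ hc
  exact integral_posPart_sub_pos hX hXnn
    ((min_le_left _ _).trans_lt (by linarith)) (hF0 ▸ hFc)

lemma integral_posPart_sub_add_sub_le [IsFiniteMeasure μ] (hX : Measurable X)
    (hXnn : ∀ ω, 0 ≤ X ω) (x : ℝ) {ε : ℝ} (hε : 0 ≤ ε) :
    ∫ ω, max (x + ε - X ω) 0 ∂μ - ∫ ω, max (x - X ω) 0 ∂μ ≤ ε * cdfOf μ X (x + ε) := by
  set A := {ω | X ω ≤ x + ε}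
  have hA : MeasurableSet A := hX measurableSet_Iic
  have hint := integrable_posPart_sub (μ := μ) hX hXnn
  -- the shortfall grows by at most `ε`, and not at all where `X > x + ε`
  have hpointwise : ∀ ω, max (x + ε - X ω) 0 - max (x - X ω) 0 ≤ A.indicator (fun _ => ε) ω := by
    intro ω
    by_cases hω : ω ∈ A
    · rw [indicator_of_mem hω]
      linarith [max_le (by linarith [le_max_left (x - X ω) 0] : x + ε - X ω ≤ max (x - X ω) 0 + ε)
        (add_nonneg (le_max_right (x - X ω) 0) hε)]
    · have hω' : x + ε < X ω := not_le.mp hω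
      rw [indicator_of_notMem hω, max_eq_right (by linarith), max_eq_right (by linarith), sub_self]
  calc ∫ ω, max (x + ε - X ω) 0 ∂μ - ∫ ω, max (x - X ω) 0 ∂μ
      = ∫ ω, (max (x + ε - X ω) 0 - max (x - X ω) 0) ∂μ := (integral_sub (hint _) (hint x)).symm
    _ ≤ ∫ ω, A.indicator (fun _ => ε) ω ∂μ :=
      integral_mono ((hint _).sub (hint x)) ((integrable_const ε).indicator hA) hpointwise
    _ = ε * cdfOf μ X (x + ε) := by rw [integral_indicator_const ε hA, smul_eq_mul, mul_comm]; rfl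

lemma profit_lt_profit_add [IsFiniteMeasure μ] (hX : Measurable X) (hXnn : ∀ ω, 0 ≤ X ω)
    {lam pr x ε : ℝ} (hlam : 0 ≤ lam) (hε : 0 < ε) (hmarg : lam * cdfOf μ X (x + ε) < pr) :
    profit μ X lam pr x < profit μ X lam pr (x + ε) := by
  have hshort := mul_le_mul_of_nonneg_left
    (integral_posPart_sub_add_sub_le (μ := μ) hX hXnn x hε.le) hlam
  have hgain : ε * (lam * cdfOf μ X (x + ε)) < ε * pr := mul_lt_mul_of_pos_left hmarg hε
  simp only [profit]
  nlinarith

end Shortfall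

lemma lt_of_lt_geninv {F : ℝ → ℝ} {t u : ℝ} (ht : 0 ≤ t) (htu : t < geninv F u) : F t < u :=
  not_le.mp fun hu => htu.not_ge (csInf_le ⟨0, fun _ hs => hs.1⟩ ⟨ht, hu⟩)

lemma mul_lt_of_lt_ystar {F : ℝ → ℝ} {lam pr t : ℝ} (hlam : 0 < lam) (ht : 0 ≤ t)
    (hty : t < ystar F lam pr) : lam * F t < pr := by
  have hFt : F t < pr / lam := (lt_of_lt_geninv ht hty).trans_le (min_le_left _ _)
  rwa [lt_div_iff₀ hlam, mul_comm] at hFt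

lemma Fintype.sum_update_add {ι M : Type*} [Fintype ι] [DecidableEq ι] [AddCommMonoid M]
    (q : ι → M) (i : ι) (ε : M) : ∑ k, Function.update q i (q i + ε) k = ∑ k, q k + ε := by
  rw [Finset.sum_update_of_mem (Finset.mem_univ i), ← Finset.add_sum_erase _ _ (Finset.mem_univ i),
    Finset.sdiff_singleton_eq_erase]
  abel

def IsPureNash {ι : Type*} [DecidableEq ι] (payoff : ι → (ι → ℝ) → ℝ) (q : ι → ℝ) : Prop :=
  ∀ i qi', 0 ≤ qi' → payoff i (Function.update q i qi') ≤ payoff i q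

def IsAllocationRule {ι : Type*} [Fintype ι] (D : ℝ) (alloc : (ι → ℝ) → ι → ℝ) : Prop :=
  ∀ q : ι → ℝ, (∀ i, 0 ≤ q i) → D < ∑ i, q i →
    (∀ i, 0 ≤ alloc q i ∧ alloc q i ≤ q i) ∧ ∑ i, alloc q i = D

section UniformPricing

variable {Ω : Type*} [MeasurableSpace Ω] {μ : Measure Ω} {I : ℕ} {X : Fin I → Ω → ℝ}
  {lam pbar D : ℝ} {alloc : (Fin I → ℝ) → Fin I → ℝ} {q : Fin I → ℝ}

lemma demand_le_sum_of_isPureNash [IsFiniteMeasure μ] (hX : ∀ i, Measurable (X i))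
    (hXnn : ∀ i ω, 0 ≤ X i ω) (hlam : 0 < lam)
    (hadeq : D < ∑ i, ystar (cdfOf μ (X i)) lam pbar) (hqnn : ∀ i, 0 ≤ q i)
    (hq : IsPureNash (upPayoff μ X lam pbar D alloc) q) :
    D ≤ ∑ i, q i := by
  by_contra! hlt
  obtain ⟨i, -, hi⟩ := Finset.exists_lt_of_sum_lt (hlt.trans hadeq)
  -- raising `q i` by `ε` keeps the price at `p̄` and stays below `yᵢ*(p̄)`
  set y := ystar (cdfOf μ (X i)) lam pbar
  set ε := min (D - ∑ k, q k) ((y - q i) / 2)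
  have hε : 0 < ε := lt_min (by linarith) (by linarith)
  have hεD : ∑ k, q k + ε ≤ D := by linarith [min_le_left (D - ∑ k, q k) ((y - q i) / 2)]
  have hεy : q i + ε < y := by linarith [min_le_right (D - ∑ k, q k) ((y - q i) / 2)]
  have hgain := profit_lt_profit_add (hX i) (hXnn i) hlam.le hε
    (mul_lt_of_lt_ystar hlam (by linarith [hqnn i]) hεy)
  have hdev := hq i (q i + ε) (by linarith [hqnn i])
  rw [upPayoff, upPayoff, Fintype.sum_update_add, if_pos hεD, if_pos hlt.le,
    Function.update_self] at hdev
  linarith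

lemma upPayoff_update_zero (hXnn : ∀ i ω, 0 ≤ X i ω) (halloc : IsAllocationRule D alloc)
    (hqnn : ∀ i, 0 ≤ q i) (i : Fin I) :
    upPayoff μ X lam pbar D alloc i (Function.update q i 0) = 0 := by
  have hnn : ∀ k, 0 ≤ Function.update q i 0 k := by
    intro k
    rcases eq_or_ne k i with rfl | hk
    · simp
    · simp [hk, hqnn k]
  unfold upPayoff
  split_ifs with h
  · rw [Function.update_self, profit_zero (hXnn i)]
  · obtain ⟨h0, hle⟩ := (halloc _ hnn (not_le.mp h)).1 i
    rw [le_antisymm (by simpa using hle) h0, profit_zero (hXnn i)]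

lemma integral_posPart_alloc_sub_eq_zero_of_isPureNash (hXnn : ∀ i ω, 0 ≤ X i ω)
    (hlam : 0 < lam) (halloc : IsAllocationRule D alloc) (hqnn : ∀ i, 0 ≤ q i)
    (hq : IsPureNash (upPayoff μ X lam pbar D alloc) q)
    (hgt : D < ∑ i, q i) (i : Fin I) :
    ∫ ω, max (alloc q i - X i ω) 0 ∂μ = 0 := by
  have hdev := hq i 0 le_rfl
  rw [upPayoff_update_zero hXnn halloc hqnn, upPayoff, if_neg hgt.not_ge, profit] at hdev
  have hshort : 0 ≤ ∫ ω, max (alloc q i - X i ω) 0 ∂μ := integral_nonneg fun _ => le_max_right _ _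
  nlinarith

lemma sum_le_demand_of_isPureNash [IsFiniteMeasure μ] (hX : ∀ i, Measurable (X i))
    (hXnn : ∀ i ω, 0 ≤ X i ω) {Xbar : Fin I → ℝ} (hXbar : ∀ i, 0 < Xbar i)
    (hF0 : ∀ i, cdfOf μ (X i) 0 = 0)
    (hFstrict : ∀ i, StrictMonoOn (cdfOf μ (X i)) (Icc 0 (Xbar i))) (hlam : 0 < lam) (hD : 0 < D)
    (halloc : IsAllocationRule D alloc) (hqnn : ∀ i, 0 ≤ q i)
    (hq : IsPureNash (upPayoff μ X lam pbar D alloc) q) :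
    ∑ i, q i ≤ D := by
  by_contra! hgt
  obtain ⟨j, -, hj⟩ : ∃ j ∈ Finset.univ, (0 : ℝ) < alloc q j :=
    Finset.exists_lt_of_sum_lt (by rw [Finset.sum_const_zero, (halloc q hqnn hgt).2]; exact hD)
  exact (integral_posPart_sub_pos_of_strictMonoOn (hX j) (hXnn j) (hXbar j) (hF0 j)
    (hFstrict j) hj).ne'
    (integral_posPart_alloc_sub_eq_zero_of_isPureNash hXnn hlam halloc hqnn hq hgt j)

end UniformPricing

theorem up_zero_bid_equilibrium_necessity_general
    {Ω : Type*} [MeasurableSpace Ω] (μ : Measure Ω) [IsProbabilityMeasure μ]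
    (I : ℕ)
    (X : Fin I → Ω → ℝ) (hX : ∀ i, Measurable (X i)) (hXnn : ∀ i ω, 0 ≤ X i ω)
    (Xbar : Fin I → ℝ) (hXbar : ∀ i, 0 < Xbar i)
    (hF0 : ∀ i, cdfOf μ (X i) 0 = 0)
    (hFstrict : ∀ i, StrictMonoOn (cdfOf μ (X i)) (Set.Icc (0:ℝ) (Xbar i)))
    (lam : ℝ) (hlam : 0 < lam) (pbar : ℝ)
    (D : ℝ) (hD : 0 < D)
    (hadeq : D < ∑ i, ystar (cdfOf μ (X i)) lam pbar)
    -- a fixed allocation rule, consistent with the mechanism when total bids exceed demand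
    (alloc : (Fin I → ℝ) → Fin I → ℝ)
    (halloc : ∀ q : Fin I → ℝ, (∀ i, 0 ≤ q i) → D < (∑ i, q i) →
      (∀ i, 0 ≤ alloc q i ∧ alloc q i ≤ q i) ∧ (∑ i, alloc q i) = D)
    -- a pure Nash equilibrium `q`
    (q : Fin I → ℝ) (hqnn : ∀ i, 0 ≤ q i)
    (hNE : ∀ i : Fin I, ∀ qi' : ℝ, 0 ≤ qi' →
      upPayoff μ X lam pbar D alloc i (Function.update q i qi')
        ≤ upPayoff μ X lam pbar D alloc i q) :
    (∑ i, q i) = D ∧ (if (∑ i, q i) ≤ D then pbar else 0) = pbar := by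
  have hsum : ∑ i, q i = D :=
    (sum_le_demand_of_isPureNash hX hXnn hXbar hF0 hFstrict hlam hD halloc hqnn hNE).antisymm
      (demand_le_sum_of_isPureNash hX hXnn hlam hadeq hqnn hNE)
  exact ⟨hsum, if_pos hsum.le⟩

/-- Proposition 1 (necessity): under uniform pricing with zero price bids, if each `Fᵢ` is
strictly increasing on `[0, X̄ᵢ]` and `∑ᵢ yᵢ*(p̄) > D`, then every pure Nash equilibrium `q*`
satisfies `∑ᵢ qᵢ* = D`, and consequently the clearing price equals the price cap `p̄`. -/
theorem up_zero_bid_equilibrium_necessity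
    {Ω : Type*} [MeasurableSpace Ω] (μ : Measure Ω) [IsProbabilityMeasure μ]
    (I : ℕ) (hI : 2 ≤ I)
    (X : Fin I → Ω → ℝ) (hX : ∀ i, Measurable (X i)) (hXnn : ∀ i ω, 0 ≤ X i ω)
    (Xbar : Fin I → ℝ) (hXbar : ∀ i, 0 < Xbar i)
    (hsupp : ∀ i, μ {ω | X i ω ≤ Xbar i} = 1)
    (hFc : ∀ i, Continuous (cdfOf μ (X i)))
    (hF0 : ∀ i, cdfOf μ (X i) 0 = 0) (hF1 : ∀ i, cdfOf μ (X i) (Xbar i) = 1)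
    (hFstrict : ∀ i, StrictMonoOn (cdfOf μ (X i)) (Set.Icc (0:ℝ) (Xbar i)))
    (lam : ℝ) (hlam : 0 < lam) (pbar : ℝ) (hpbar : 0 < pbar)
    (D : ℝ) (hD : 0 < D)
    (hadeq : D < ∑ i, ystar (cdfOf μ (X i)) lam pbar)
    -- a fixed allocation rule, consistent with the mechanism when total bids exceed demand
    (alloc : (Fin I → ℝ) → Fin I → ℝ)
    (halloc : ∀ q : Fin I → ℝ, (∀ i, 0 ≤ q i) → D < (∑ i, q i) →
      (∀ i, 0 ≤ alloc q i ∧ alloc q i ≤ q i) ∧ (∑ i, alloc q i) = D)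
    -- a pure Nash equilibrium `q`
    (q : Fin I → ℝ) (hqnn : ∀ i, 0 ≤ q i)
    (hNE : ∀ i : Fin I, ∀ qi' : ℝ, 0 ≤ qi' →
      upPayoff μ X lam pbar D alloc i (Function.update q i qi')
        ≤ upPayoff μ X lam pbar D alloc i q) :
    (∑ i, q i) = D ∧ (if (∑ i, q i) ≤ D then pbar else 0) = pbar :=
  up_zero_bid_equilibrium_necessity_general μ I X hX hXnn Xbar hXbar hF0 hFstrict lam hlam pbar D hD
    hadeq alloc halloc q hqnn hNE
end

section
/- (Proposition 2, dual optimality) Suppose π* satisfies 0 < π* ≤ min(λ, p̄) and Q(π*) = ∑ᵢ yᵢ*(π*) = D, and set xᵢ* = yᵢ*(π*) for each supplier i and x₀* = 0. Then π* is a Lagrange multiplier for the demand constraint: for all x₀ ≥ 0 and xᵢ ≥ 0 (i = 1, …, I), ∑ᵢ λ·E[(xᵢ − Xᵢ)⁺] + p̄·x₀ − π*·(∑ᵢ xᵢ + x₀ − D) ≥ ∑ᵢ λ·E[(xᵢ* − Xᵢ)⁺]; that is, x* minimizes the Lagrangian of the dispatch problem with multiplier π* over the nonnegative orthant. -/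
open MeasureTheory Set

/-!
The expected shortfall `x ↦ E[(x − X)⁺]` is convex with subgradient `F(a)` at every `a`,
because `(x − X)⁺ ≥ (a − X)⁺ + (x − a)·1{X ≤ a}` pointwise. At `a = y*(π*)` continuity of `F`
gives `F(a) = π*/λ`, so `y*(π*)` maximizes the profit `x·π* − λ·E[(x − X)⁺]` over all `x`.
Summing over the suppliers and using `Q(π*) = D` bounds the supplier part of the Lagrangian;
lost load costs `p̄ ≥ π*` per unit, so `x₀ ≥ 0` only adds `(p̄ − π*)·x₀ ≥ 0`.
-/

theorem apply_geninv_eq {F : ℝ → ℝ} (hF : Continuous F) (hF0 : F 0 = 0)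
    {u b : ℝ} (hu : 0 ≤ u) (hb : 0 ≤ b) (hub : u ≤ F b) :
    F (geninv F u) = u := by
  set S : Set ℝ := {t | 0 ≤ t ∧ u ≤ F t}
  have hbdd : BddBelow S := ⟨0, fun _ ht => ht.1⟩
  have hclosed : IsClosed S := isClosed_Ici.inter (isClosed_Ici.preimage hF)
  obtain ⟨hm0, hmu⟩ : geninv F u ∈ S := hclosed.csInf_mem ⟨b, hb, hub⟩ hbdd
  obtain ⟨t, ht, hFt⟩ :=
    intermediate_value_Icc hm0 hF.continuousOn ⟨hF0.symm ▸ hu, hmu⟩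
  have hmt : geninv F u ≤ t := csInf_le hbdd ⟨ht.1, hFt.ge⟩
  rwa [← le_antisymm ht.2 hmt]

section Shortfall

variable {Ω : Type*} [MeasurableSpace Ω] {μ : Measure Ω} [IsFiniteMeasure μ]
  {X : Ω → ℝ}

theorem integrable_max_sub_zero (hX : Measurable X) (hXnn : ∀ ω, 0 ≤ X ω) (a : ℝ) :
    Integrable (fun ω => max (a - X ω) 0) μ := by
  refine .of_bound ((measurable_const.sub hX).max measurable_const).aestronglyMeasurable |a|
    (.of_forall fun ω => ?_)
  rw [Real.norm_eq_abs, abs_of_nonneg (le_max_right _ _)]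
  exact max_le (by linarith [hXnn ω, le_abs_self a]) (abs_nonneg a)

theorem integral_max_sub_zero_add_le (hX : Measurable X) (hXnn : ∀ ω, 0 ≤ X ω) (a x : ℝ) :
    (∫ ω, max (a - X ω) 0 ∂μ) + (x - a) * cdfOf μ X a ≤ ∫ ω, max (x - X ω) 0 ∂μ := by
  set s : Set Ω := {ω | X ω ≤ a}
  have hs : MeasurableSet s := hX measurableSet_Iic
  have hpointwise : ∀ ω, max (a - X ω) 0 + s.indicator (fun _ => x - a) ω ≤ max (x - X ω) 0 := by
    intro ω
    by_cases hω : X ω ≤ a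
    · rw [indicator_of_mem (show ω ∈ s from hω), max_eq_left (by linarith)]
      linarith [le_max_left (x - X ω) 0]
    · rw [indicator_of_notMem (show ω ∉ s from hω), add_zero, max_eq_right (by linarith)]
      exact le_max_right _ _
  have hint_a : Integrable (fun ω => max (a - X ω) 0) μ := integrable_max_sub_zero hX hXnn a
  have hint_s : Integrable (s.indicator fun _ => x - a) μ := (integrable_const _).indicator hs
  have hmono := integral_mono (hint_a.add hint_s) (integrable_max_sub_zero hX hXnn x) hpointwise
  rwa [integral_add' hint_a hint_s, integral_indicator_const _ hs, smul_eq_mul, mul_comm] at hmono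

theorem profit_le_of_mul_cdfOf_eq (hX : Measurable X) (hXnn : ∀ ω, 0 ≤ X ω)
    {lam pr a : ℝ} (hlam : 0 ≤ lam) (ha : lam * cdfOf μ X a = pr) (x : ℝ) :
    profit μ X lam pr x ≤ profit μ X lam pr a := by
  have hsub := mul_le_mul_of_nonneg_left (integral_max_sub_zero_add_le (μ := μ) hX hXnn a x) hlam
  subst ha
  unfold profit
  linear_combination hsub

theorem profit_le_profit_ystar (hX : Measurable X) (hXnn : ∀ ω, 0 ≤ X ω)
    (hFc : Continuous (cdfOf μ X)) (hF0 : cdfOf μ X 0 = 0)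
    {Xbar : ℝ} (hXbar : 0 ≤ Xbar) (hF1 : cdfOf μ X Xbar = 1)
    {lam pr : ℝ} (hlam : 0 < lam) (hpr0 : 0 ≤ pr) (hprlam : pr ≤ lam) (x : ℝ) :
    profit μ X lam pr x ≤ profit μ X lam pr (ystar (cdfOf μ X) lam pr) := by
  have hu1 : pr / lam ≤ 1 := div_le_one_of_le₀ hprlam hlam.le
  have hFy : cdfOf μ X (ystar (cdfOf μ X) lam pr) = pr / lam := by
    rw [ystar, min_eq_left hu1]
    exact apply_geninv_eq hFc hF0 (div_nonneg hpr0 hlam.le) hXbar (hF1 ▸ hu1)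
  refine profit_le_of_mul_cdfOf_eq hX hXnn hlam.le ?_ x
  rw [hFy, mul_div_cancel₀ _ hlam.ne']

end Shortfall

theorem rup_dual_optimality_general
    {Ω : Type*} [MeasurableSpace Ω] (μ : Measure Ω) [IsProbabilityMeasure μ]
    (I : ℕ)
    (X : Fin I → Ω → ℝ) (hX : ∀ i, Measurable (X i)) (hXnn : ∀ i ω, 0 ≤ X i ω)
    (Xbar : Fin I → ℝ) (hXbar : ∀ i, 0 < Xbar i)
    (hFc : ∀ i, Continuous (cdfOf μ (X i)))
    (hF0 : ∀ i, cdfOf μ (X i) 0 = 0) (hF1 : ∀ i, cdfOf μ (X i) (Xbar i) = 1)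
    (lam : ℝ) (hlam : 0 < lam) (pbar : ℝ)
    (D : ℝ)
    (pistar : ℝ) (hpi0 : 0 < pistar) (hpile : pistar ≤ min lam pbar)
    (hclear : (∑ i, ystar (cdfOf μ (X i)) lam pistar) = D) :
    ∀ (x0 : ℝ) (x : Fin I → ℝ), 0 ≤ x0 → (∀ i, 0 ≤ x i) →
      (∑ i, lam * ∫ ω, max (ystar (cdfOf μ (X i)) lam pistar - X i ω) 0 ∂μ)
        ≤ (∑ i, lam * ∫ ω, max (x i - X i ω) 0 ∂μ) + pbar * x0
            - pistar * ((∑ i, x i) + x0 - D) := by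
  intro x0 x hx0 _
  have hsuppliers := Finset.sum_le_sum fun i (_ : i ∈ Finset.univ) =>
    profit_le_profit_ystar (hX i) (hXnn i) (hFc i) (hF0 i) (hXbar i).le (hF1 i) hlam hpi0.le
      (hpile.trans (min_le_left _ _)) (x i)
  simp only [profit, Finset.sum_sub_distrib, ← Finset.sum_mul, hclear] at hsuppliers
  have hlostLoad : pistar * x0 ≤ pbar * x0 :=
    mul_le_mul_of_nonneg_right (hpile.trans (min_le_right _ _)) hx0
  linarith

/-- Proposition 2 (dual optimality): if `0 < π* ≤ min(λ, p̄)` and `∑ᵢ yᵢ*(π*) = D`, setting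
`xᵢ* = yᵢ*(π*)` and `x₀* = 0`, the price `π*` is a Lagrange multiplier for the demand
constraint: for all `x₀ ≥ 0` and `xᵢ ≥ 0`,
`∑ᵢ λ·E[(xᵢ − Xᵢ)⁺] + p̄·x₀ − π*·(∑ᵢ xᵢ + x₀ − D) ≥ ∑ᵢ λ·E[(xᵢ* − Xᵢ)⁺]`. -/
theorem rup_dual_optimality
    {Ω : Type*} [MeasurableSpace Ω] (μ : Measure Ω) [IsProbabilityMeasure μ]
    (I : ℕ) (hI : 2 ≤ I)
    (X : Fin I → Ω → ℝ) (hX : ∀ i, Measurable (X i)) (hXnn : ∀ i ω, 0 ≤ X i ω)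
    (Xbar : Fin I → ℝ) (hXbar : ∀ i, 0 < Xbar i)
    (hsupp : ∀ i, μ {ω | X i ω ≤ Xbar i} = 1)
    (hFc : ∀ i, Continuous (cdfOf μ (X i)))
    (hF0 : ∀ i, cdfOf μ (X i) 0 = 0) (hF1 : ∀ i, cdfOf μ (X i) (Xbar i) = 1)
    (lam : ℝ) (hlam : 0 < lam) (pbar : ℝ) (hpbar : 0 < pbar)
    (D : ℝ) (hD : 0 < D)
    (pistar : ℝ) (hpi0 : 0 < pistar) (hpile : pistar ≤ min lam pbar)
    (hclear : (∑ i, ystar (cdfOf μ (X i)) lam pistar) = D) :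
    ∀ (x0 : ℝ) (x : Fin I → ℝ), 0 ≤ x0 → (∀ i, 0 ≤ x i) →
      (∑ i, lam * ∫ ω, max (ystar (cdfOf μ (X i)) lam pistar - X i ω) 0 ∂μ)
        ≤ (∑ i, lam * ∫ ω, max (x i - X i ω) 0 ∂μ) + pbar * x0
            - pistar * ((∑ i, x i) + x0 - D) :=
  rup_dual_optimality_general μ I X hX hXnn Xbar hXbar hFc hF0 hF1 lam hlam pbar D pistar hpi0 hpile
    hclear
end
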